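/- arXiv:1908.08434 — 3 statements merged into one kernel-verified Lean document; each statement's English description precedes it below -/
import Mathlib

section
/- Let h ∈ L²(X,μ) be a Borel function with |h| ≤ C for some C > 0, and define L(x,y) = h(x) − h(y) on X×X, where G acts diagonally on X×X by g(x,y) = (gx,gy) and preserves μ×μ. If h is not almost periodic in L²(X,μ), then L is not almost periodic in L²(X×X, μ×μ). -/
open MeasureTheory Filter Topology Set
open scoped Pointwise ENNReal symmDiff BigOperators

/-- The averaged semimetric `w̄_F(x,y) = (1/|F|) ∑_{g ∈ F} w(gx, gy)`. -/
noncomputable def avgMetric {G X : Type*} [SMul G X] (F : Finset G) (w : X → X → ℝ)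
    (x y : X) : ℝ :=
  (∑ g ∈ F, w (g • x) (g • y)) / F.card

/-- `F` is a Følner sequence: each `F n` is nonempty and `|gF_n Δ F_n|/|F_n| → 0` for all `g`. -/
def FolnerSeq {G : Type*} [Group G] [DecidableEq G] (F : ℕ → Finset G) : Prop :=
  (∀ n, (F n).Nonempty) ∧
    ∀ g : G, Tendsto (fun n => (((g • F n) ∆ F n).card : ℝ) / ((F n).card : ℝ)) atTop (𝓝 0)

/-- `F` is tempered: `|⋃_{k<n} F_k⁻¹ F_n| ≤ C |F_n|` for some `C > 0` and all `n`. -/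
def TemperedSeq {G : Type*} [Group G] [DecidableEq G] (F : ℕ → Finset G) : Prop :=
  ∃ C : ℝ, 0 < C ∧ ∀ n : ℕ,
    ((((Finset.range n).biUnion fun k => (F k)⁻¹ * F n)).card : ℝ) ≤ C * ((F n).card : ℝ)

/-- `μ` has bounded complexity w.r.t. `{w̄_{F_n}}`: for every `ε > 0` there is a uniform bound
`M` such that for every `n` there are at most `M` points whose `ε/2`-balls in the metric
`w̄_{F_n}` cover `X` up to measure `ε`. -/
def BoundedComplexity {G X : Type*} [SMul G X] [MeasurableSpace X]
    (μ : Measure X) (F : ℕ → Finset G) (w : X → X → ℝ) : Prop :=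
  ∀ ε : ℝ, 0 < ε → ∃ M : ℕ, ∀ n : ℕ, ∃ s : Finset X, s.card ≤ M ∧
    (μ {y : X | ∃ x ∈ s, avgMetric (F n) w x y < ε / 2}).toReal > 1 - ε

/-- `h` is almost periodic in `L²(μ)`: its `G`-orbit `{h ∘ g}` is totally bounded (equivalently,
precompact) in `L²(μ)`. -/
def AlmostPeriodic (G : Type*) {X : Type*} [SMul G X] [MeasurableSpace X]
    (μ : Measure X) (h : X → ℝ) : Prop :=
  ∀ ε : ℝ, 0 < ε → ∃ S : Finset G, ∀ g : G, ∃ g' ∈ S,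
    eLpNorm (fun x => h (g • x) - h (g' • x)) 2 μ < ENNReal.ofReal ε

/-- `μ` has discrete spectrum: every (Borel) function in `L²(X, μ)` is almost periodic. -/
def DiscreteSpectrum (G : Type*) {X : Type*} [SMul G X] [MeasurableSpace X]
    (μ : Measure X) : Prop :=
  ∀ h : X → ℝ, Measurable h → MemLp h 2 μ → AlmostPeriodic G μ h

section Aux

variable {α : Type*} [MeasurableSpace α] {μ : Measure α}

lemma int_of_bound [IsFiniteMeasure μ] {f : α → ℝ} (hf : Measurable f) (C : ℝ)
    (hb : ∀ x, |f x| ≤ C) : Integrable f μ :=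
  (memLp_top_of_bound hf.aestronglyMeasurable C (Filter.Eventually.of_forall
    (fun x => by simpa using hb x))).integrable le_top

lemma eLpNorm_two_eq {f : α → ℝ}
    (hi : Integrable (fun x => f x ^ 2) μ) :
    eLpNorm f 2 μ = ENNReal.ofReal (∫ x, f x ^ 2 ∂μ) ^ (1/2 : ℝ) := by
  rw [eLpNorm_eq_lintegral_rpow_enorm_toReal (by norm_num) (by norm_num)]
  congr 1
  rw [ofReal_integral_eq_lintegral_ofReal hi (Filter.Eventually.of_forall
    (fun x => sq_nonneg _))]
  refine lintegral_congr fun x => ?_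
  rw [ENNReal.toReal_ofNat, ← ofReal_norm,
    ENNReal.ofReal_rpow_of_nonneg (norm_nonneg _) (by norm_num)]
  congr 1
  rw [Real.rpow_two, Real.norm_eq_abs, sq_abs]

/-- If `u` is bounded, measurable and has mean zero, then its `L²` norm is at most the
`L²(μ × μ)` norm of `(x, y) ↦ u x - u y`. -/
lemma eLpNorm_le_prod [IsProbabilityMeasure μ] {u : α → ℝ} (hu : Measurable u) (C : ℝ)
    (hb : ∀ x, |u x| ≤ C) (hmean : ∫ x, u x ∂μ = 0) :
    eLpNorm u 2 μ ≤ eLpNorm (fun p : α × α => u p.1 - u p.2) 2 (μ.prod μ) := by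
  have hsq : Integrable (fun x => u x ^ 2) μ :=
    int_of_bound (hu.pow_const 2) (C ^ 2) (fun x => by
      rw [abs_pow]
      exact pow_le_pow_left₀ (abs_nonneg _) (hb x) 2)
  have hu1 : Measurable (fun p : α × α => u p.1) := hu.comp measurable_fst
  have hu2 : Measurable (fun p : α × α => u p.2) := hu.comp measurable_snd
  have hbp : ∀ p : α × α, |u p.1 - u p.2| ≤ C + C := fun p =>
    (abs_sub _ _).trans (add_le_add (hb _) (hb _))
  have hsqp : Integrable (fun p : α × α => (u p.1 - u p.2) ^ 2) (μ.prod μ) :=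
    int_of_bound ((hu1.sub hu2).pow_const 2) ((C + C) ^ 2) (fun p => by
      rw [abs_pow]
      exact pow_le_pow_left₀ (abs_nonneg _) (hbp p) 2)
  have h1 : Integrable (fun p : α × α => u p.1 ^ 2) (μ.prod μ) :=
    int_of_bound (hu1.pow_const 2) (C ^ 2) (fun p => by
      rw [abs_pow]; exact pow_le_pow_left₀ (abs_nonneg _) (hb _) 2)
  have h2 : Integrable (fun p : α × α => u p.2 ^ 2) (μ.prod μ) :=
    int_of_bound (hu2.pow_const 2) (C ^ 2) (fun p => by
      rw [abs_pow]; exact pow_le_pow_left₀ (abs_nonneg _) (hb _) 2)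
  have h3 : Integrable (fun p : α × α => u p.1 * u p.2) (μ.prod μ) :=
    int_of_bound (hu1.mul hu2) (C * C) (fun p => by
      rw [abs_mul]
      exact mul_le_mul (hb p.1) (hb p.2) (abs_nonneg _) ((abs_nonneg (u p.1)).trans (hb p.1)))
  -- compute the product integral
  have key : ∫ p : α × α, (u p.1 - u p.2) ^ 2 ∂(μ.prod μ) = 2 * ∫ x, u x ^ 2 ∂μ := by
    have expand : (fun p : α × α => (u p.1 - u p.2) ^ 2)
        = fun p : α × α => u p.1 ^ 2 + u p.2 ^ 2 - 2 * (u p.1 * u p.2) := by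
      funext p; ring
    have h12 : Integrable (fun p : α × α => u p.1 ^ 2 + u p.2 ^ 2) (μ.prod μ) := by
      exact h1.add h2
    rw [expand, integral_sub h12 (h3.const_mul 2), integral_add h1 h2, MeasureTheory.integral_const_mul]
    have e1 : ∫ p : α × α, u p.1 ^ 2 ∂(μ.prod μ) = ∫ x, u x ^ 2 ∂μ := by
      have := integral_prod_mul (μ := μ) (ν := μ) (f := fun x => u x ^ 2)
        (g := fun _ => (1 : ℝ))
      simpa using this
    have e2 : ∫ p : α × α, u p.2 ^ 2 ∂(μ.prod μ) = ∫ x, u x ^ 2 ∂μ := by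
      have := integral_prod_mul (μ := μ) (ν := μ) (f := fun _ => (1 : ℝ))
        (g := fun x => u x ^ 2)
      simpa using this
    have e3 : ∫ p : α × α, u p.1 * u p.2 ∂(μ.prod μ) = 0 := by
      have := integral_prod_mul (μ := μ) (ν := μ) (f := u) (g := u)
      rw [hmean] at this
      simpa using this
    rw [e1, e2, e3]; ring
  rw [eLpNorm_two_eq hsq, eLpNorm_two_eq hsqp, key]
  refine ENNReal.rpow_le_rpow (ENNReal.ofReal_le_ofReal ?_) (by norm_num)
  nlinarith [integral_nonneg (f := fun x : α => u x ^ 2) (fun x : α => sq_nonneg (u x)) (μ := μ)]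

end Aux


variable {X : Type*} [MetricSpace X] [CompactSpace X] [MeasurableSpace X] [BorelSpace X]
variable {G : Type*} [Group G] [Countable G] [Infinite G] [DecidableEq G]
variable [MulAction G X] [ContinuousConstSMul G X]

lemma integral_comp_smul (μ : Measure X) [SMulInvariantMeasure G X μ] (g : G) (f : X → ℝ) :
    ∫ x, f (g • x) ∂μ = ∫ x, f x ∂μ := by
  have hemb : MeasurableEmbedding (fun x : X => g • x) :=
    (Homeomorph.smul g (α := X)).measurableEmbedding
  have hmp : MeasurePreserving (fun x : X => g • x) μ μ :=
    { measurable := (continuous_const_smul g).measurable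
      map_eq := by
        ext s hs
        rw [Measure.map_apply (continuous_const_smul g).measurable hs]
        exact SMulInvariantMeasure.measure_preimage_smul g hs }
  rw [← hemb.integral_map, hmp.map_eq]


theorem not_almostPeriodic_of_not_almostPeriodic
    (μ : Measure X) [IsProbabilityMeasure μ] [SMulInvariantMeasure G X μ]
    (h : X → ℝ) (hmeas : Measurable h) (hL2 : MemLp h 2 μ)
    (C : ℝ) (hC : 0 < C) (hbd : ∀ x, |h x| ≤ C)
    (hna : ¬ AlmostPeriodic G μ h) :
    ¬ AlmostPeriodic G (μ.prod μ) (fun p : X × X => h p.1 - h p.2) := by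
  intro hAP
  apply hna
  intro ε hε
  obtain ⟨S, hS⟩ := hAP ε hε
  refine ⟨S, fun g => ?_⟩
  obtain ⟨g', hg'S, hlt⟩ := hS g
  set u : X → ℝ := fun x => h (g • x) - h (g' • x) with hu_def
  have hu : Measurable u :=
    (hmeas.comp (continuous_const_smul g).measurable).sub
      (hmeas.comp (continuous_const_smul g').measurable)
  have hub : ∀ x, |u x| ≤ C + C := fun x =>
    (abs_sub _ _).trans (add_le_add (hbd _) (hbd _))
  have hmean : ∫ x, u x ∂μ = 0 := by
    have i1 : Integrable (fun x => h (g • x)) μ :=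
      int_of_bound (hmeas.comp (continuous_const_smul g).measurable) C (fun x => hbd _)
    have i2 : Integrable (fun x => h (g' • x)) μ :=
      int_of_bound (hmeas.comp (continuous_const_smul g').measurable) C (fun x => hbd _)
    rw [hu_def, integral_sub i1 i2, integral_comp_smul μ g h, integral_comp_smul μ g' h,
      sub_self]
  have heq : (fun p : X × X =>
      (fun q : X × X => h q.1 - h q.2) (g • p) - (fun q : X × X => h q.1 - h q.2) (g' • p))
      = fun p : X × X => u p.1 - u p.2 := by
    funext p
    simp only [Prod.smul_fst, Prod.smul_snd, hu_def]
    ring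
  rw [heq] at hlt
  exact ⟨g', hg'S, lt_of_le_of_lt (eLpNorm_le_prod hu (C + C) hub hmean) hlt⟩
end

section
/- If μ has discrete spectrum, then for every continuous semimetric ρ on X, μ has bounded complexity with respect to {ρ̄_{F_n} : n ∈ ℕ}. -/
open MeasureTheory Filter Topology Set
open scoped Pointwise ENNReal symmDiff BigOperators

variable {X : Type*} [MetricSpace X] [CompactSpace X] [MeasurableSpace X] [BorelSpace X]
variable {G : Type*} [Group G] [Countable G] [Infinite G] [DecidableEq G]
variable [MulAction G X] [ContinuousConstSMul G X]

/-- `ρ` is a semimetric: vanishing on the diagonal, symmetric, triangle inequality. -/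
def IsSemimetric {X : Type*} (ρ : X → X → ℝ) : Prop :=
  (∀ x, ρ x x = 0) ∧ (∀ x y, ρ x y = ρ y x) ∧ (∀ x y z, ρ x z ≤ ρ x y + ρ y z)

/-- A semimetric `ρ` is continuous if the identity map `(X, d) → (X, ρ)` is continuous. -/
def ContinuousSemimetric {X : Type*} [MetricSpace X] (ρ : X → X → ℝ) : Prop :=
  IsSemimetric ρ ∧
    ∀ x : X, ∀ ε : ℝ, 0 < ε → ∃ δ : ℝ, 0 < δ ∧ ∀ y : X, dist x y < δ → ρ x y < ε

/-! ### Auxiliary lemmas -/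

lemma my_nonneg {X : Type*} {ρ : X → X → ℝ} (h : IsSemimetric ρ) (x y : X) : 0 ≤ ρ x y := by
  obtain ⟨h0, hs, ht⟩ := h
  have := ht x y x
  rw [h0, hs y x] at this
  linarith

lemma my_cont {X : Type*} [MetricSpace X] {ρ : X → X → ℝ}
    (hsm : IsSemimetric ρ)
    (hc : ∀ x : X, ∀ ε : ℝ, 0 < ε → ∃ δ : ℝ, 0 < δ ∧ ∀ y : X, dist x y < δ → ρ x y < ε)
    (c : X) : Continuous (ρ c) := by
  obtain ⟨h0, hs, ht⟩ := hsm
  rw [Metric.continuous_iff]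
  intro b ε hε
  obtain ⟨δ, hδ, hδ'⟩ := hc b ε hε
  refine ⟨δ, hδ, fun a ha => ?_⟩
  have h1 : ρ c a ≤ ρ c b + ρ b a := ht c b a
  have h2 : ρ c b ≤ ρ c a + ρ b a := by
    have := ht c a b; rw [hs a b] at this; linarith
  have hba : ρ b a < ε := hδ' a (by rwa [dist_comm] at ha)
  rw [Real.dist_eq, abs_lt]
  constructor <;> linarith

lemma my_net {X : Type*} [MetricSpace X] [CompactSpace X]
    (w : X → X → ℝ) (hw : ∀ x, Continuous (w x)) (h0 : ∀ x, w x x = 0)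
    {r : ℝ} (hr : 0 < r) : ∃ J : Finset X, ∀ y : X, ∃ z ∈ J, w z y < r := by
  obtain ⟨J, hJ⟩ := IsCompact.elim_finite_subcover (isCompact_univ (X := X))
    (fun z => {y | w z y < r}) (fun z => isOpen_lt (hw z) continuous_const)
    (fun y _ => by simp only [mem_iUnion]; exact ⟨y, by simp [h0 y, hr]⟩)
  refine ⟨J, fun y => ?_⟩
  have := hJ (mem_univ y)
  simpa using this

lemma my_memLp {X : Type*} [MetricSpace X] [CompactSpace X] [MeasurableSpace X] [BorelSpace X]
    (μ : Measure X) [IsProbabilityMeasure μ] {f : X → ℝ} (hf : Continuous f) :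
    MemLp f 2 μ := by
  obtain ⟨C, hC⟩ := (isCompact_univ (X := X)).exists_bound_of_continuousOn hf.continuousOn
  exact (memLp_top_of_bound hf.aestronglyMeasurable C
    (Filter.Eventually.of_forall fun x => hC x (mem_univ x))).mono_exponent le_top

lemma my_integrable {X : Type*} [MetricSpace X] [CompactSpace X] [MeasurableSpace X]
    [BorelSpace X] (μ : Measure X) [IsProbabilityMeasure μ] {f : X → ℝ}
    (hf : Continuous f) : Integrable f μ := by
  obtain ⟨C, hC⟩ := (isCompact_univ (X := X)).exists_bound_of_continuousOn hf.continuousOn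
  exact memLp_one_iff_integrable.mp ((memLp_top_of_bound hf.aestronglyMeasurable C
    (Filter.Eventually.of_forall fun x => hC x (mem_univ x))).mono_exponent le_top)

set_option maxHeartbeats 1000000 in
theorem boundedComplexity_of_discreteSpectrum
    (μ : Measure X) [IsProbabilityMeasure μ] [SMulInvariantMeasure G X μ]
    (F : ℕ → Finset G) (hF : FolnerSeq F)
    (hds : DiscreteSpectrum G μ) :
    ∀ ρ : X → X → ℝ, ContinuousSemimetric ρ → BoundedComplexity μ F ρ := by
  classical
  intro ρ hρ
  obtain ⟨hsm, hc⟩ := hρ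
  have hcont : ∀ c, Continuous (ρ c) := my_cont hsm hc
  have hnn : ∀ x y, 0 ≤ ρ x y := my_nonneg hsm
  obtain ⟨hρ0, hρs, hρt⟩ := hsm
  intro ε hε
  obtain ⟨I, hI⟩ := my_net ρ hcont hρ0 (show (0:ℝ) < ε/8 by linarith)
  set m : ℕ := I.card with hm
  set η : ℝ := ε/16 with hη
  have hηpos : 0 < η := by rw [hη]; linarith
  set δ : ℝ := ε * η / (16 * (m+1)) with hδdef
  have hδpos : 0 < δ := by
    rw [hδdef]; positivity
  have hap : ∀ c : X, ∃ S : Finset G, ∀ g : G, ∃ g' ∈ S,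
      eLpNorm (fun x => ρ c (g • x) - ρ c (g' • x)) 2 μ < ENNReal.ofReal δ :=
    fun c => hds (ρ c) (hcont c).measurable (my_memLp μ (hcont c)) δ hδpos
  choose S hS using hap
  choose τ hτS hτ using hS
  set D : X → X → ℝ := fun x y => ∑ c ∈ I, ∑ s ∈ S c, |ρ c (s • x) - ρ c (s • y)| with hD
  have hDcont : ∀ x, Continuous (D x) := by
    intro x
    apply continuous_finset_sum
    intro c _
    apply continuous_finset_sum
    intro s _
    exact (continuous_const.sub ((hcont c).comp (continuous_const_smul s))).abs
  have hD0 : ∀ x, D x x = 0 := by intro x; simp [hD]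
  have hDsymm : ∀ x y, D x y = D y x := by
    intro x y
    simp only [hD]
    exact Finset.sum_congr rfl fun c _ => Finset.sum_congr rfl fun s _ => abs_sub_comm _ _
  have hDtri : ∀ x y z, D x z ≤ D x y + D y z := by
    intro x y z
    calc D x z ≤ ∑ c ∈ I, ((∑ s ∈ S c, |ρ c (s • x) - ρ c (s • y)|)
          + (∑ s ∈ S c, |ρ c (s • y) - ρ c (s • z)|)) := by
          refine Finset.sum_le_sum fun c _ => ?_
          rw [← Finset.sum_add_distrib]
          exact Finset.sum_le_sum fun s _ => abs_sub_le _ _ _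
      _ = D x y + D y z := Finset.sum_add_distrib
  obtain ⟨J, hJ⟩ := my_net D hDcont hD0 (show (0:ℝ) < ε/32 by linarith)
  refine ⟨J.card, fun n => ?_⟩
  have hFne := hF.1 n
  set c0 : ℝ := ((F n).card : ℝ) with hc0
  have hc0pos : 0 < c0 := by
    rw [hc0]; exact_mod_cast Finset.card_pos.mpr hFne
  set E : X → ℝ := fun x => ∑ c ∈ I, (∑ g ∈ F n, |ρ c (g • x) - ρ c (τ c g • x)|) / c0 with hE
  have hEcont : Continuous E := by
    apply continuous_finset_sum
    intro c _
    apply Continuous.div_const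
    apply continuous_finset_sum
    intro g _
    exact (((hcont c).comp (continuous_const_smul g)).sub
      ((hcont c).comp (continuous_const_smul (τ c g)))).abs
  have hEnn : ∀ x, 0 ≤ E x := by
    intro x
    refine Finset.sum_nonneg fun c _ => div_nonneg (Finset.sum_nonneg fun g _ => abs_nonneg _)
      hc0pos.le
  -- L¹-bound on each approximation error
  have hterm : ∀ c : X, ∀ g : G, ∫ x, |ρ c (g • x) - ρ c (τ c g • x)| ∂μ ≤ δ := by
    intro c g
    set f : X → ℝ := fun x => ρ c (g • x) - ρ c (τ c g • x) with hf
    have hfc : Continuous f :=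
      ((hcont c).comp (continuous_const_smul g)).sub ((hcont c).comp (continuous_const_smul (τ c g)))
    have h2 : eLpNorm f 2 μ < ENNReal.ofReal δ := hτ c g
    have h1 : eLpNorm f 1 μ ≤ eLpNorm f 2 μ :=
      eLpNorm_le_eLpNorm_of_exponent_le (by norm_num) hfc.aestronglyMeasurable
    have heq : ∫ x, |f x| ∂μ = (eLpNorm f 1 μ).toReal := by
      rw [eLpNorm_one_eq_lintegral_enorm,
        ← integral_norm_eq_lintegral_enorm hfc.aestronglyMeasurable]
      simp [Real.norm_eq_abs]
    calc ∫ x, |f x| ∂μ = (eLpNorm f 1 μ).toReal := heq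
      _ ≤ (ENNReal.ofReal δ).toReal :=
          ENNReal.toReal_mono ENNReal.ofReal_ne_top (h1.trans h2.le)
      _ = δ := ENNReal.toReal_ofReal hδpos.le
  have hEint : Integrable E μ := my_integrable μ hEcont
  have hEbound : ∫ x, E x ∂μ ≤ m * δ := by
    have : ∫ x, E x ∂μ = ∑ c ∈ I, (∑ g ∈ F n, ∫ x, |ρ c (g • x) - ρ c (τ c g • x)| ∂μ) / c0 := by
      rw [hE, integral_finset_sum]
      · refine Finset.sum_congr rfl fun c _ => ?_
        rw [integral_div, integral_finset_sum]
        intro g _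
        exact my_integrable μ (((hcont c).comp (continuous_const_smul g)).sub
          ((hcont c).comp (continuous_const_smul (τ c g)))).abs
      · intro c _
        apply Integrable.div_const
        apply integrable_finset_sum
        intro g _
        exact my_integrable μ (((hcont c).comp (continuous_const_smul g)).sub
          ((hcont c).comp (continuous_const_smul (τ c g)))).abs
    rw [this]
    calc ∑ c ∈ I, (∑ g ∈ F n, ∫ x, |ρ c (g • x) - ρ c (τ c g • x)| ∂μ) / c0
        ≤ ∑ c ∈ I, (∑ g ∈ F n, δ) / c0 := by
          refine Finset.sum_le_sum fun c _ => ?_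
          gcongr with g hg
          exact hterm c g
      _ = m * δ := by
          have h1 : (∑ _g ∈ F n, δ) = c0 * δ := by
            rw [Finset.sum_const, nsmul_eq_mul, hc0]
          rw [h1, mul_div_cancel_left₀ _ hc0pos.ne', Finset.sum_const, nsmul_eq_mul, hm]
  -- Markov's inequality
  have hmark := mul_meas_ge_le_integral_of_nonneg (Filter.Eventually.of_forall hEnn) hEint η
  set t : ℝ := (μ {x | η ≤ E x}).toReal with ht
  have htnn : 0 ≤ t := ENNReal.toReal_nonneg
  have htlt : t < ε := by
    have h1 : η * t ≤ (m : ℝ) * δ := hmark.trans hEbound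
    have hK : (0:ℝ) < 16 * ((m:ℝ)+1) := by positivity
    have h2 : (m:ℝ) * δ = η * ((m:ℝ) * ε / (16 * ((m:ℝ)+1))) := by
      rw [hδdef]; ring
    have h3 : t ≤ (m:ℝ) * ε / (16 * ((m:ℝ)+1)) := by
      rw [h2] at h1
      exact le_of_mul_le_mul_left h1 hηpos
    have h4 : (m:ℝ) * ε / (16 * ((m:ℝ)+1)) < ε := by
      rw [div_lt_iff₀ hK]
      nlinarith [Nat.cast_nonneg (α := ℝ) m]
    linarith
  have hbadmeas : MeasurableSet {x | η ≤ E x} :=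
    measurableSet_le measurable_const hEcont.measurable
  have hAset : {x | E x < η} = {x | η ≤ E x}ᶜ := by ext x; simp [not_le]
  have hA : (μ {x | E x < η}).toReal > 1 - ε := by
    rw [hAset, measure_compl hbadmeas (measure_ne_top μ _), measure_univ,
      ENNReal.toReal_sub_of_le prob_le_one ENNReal.one_ne_top, ENNReal.toReal_one, ← ht]
    linarith
  -- the master inequality
  have hEx : ∀ x : X, E x = (∑ g ∈ F n, ∑ c ∈ I, |ρ c (g • x) - ρ c (τ c g • x)|) / c0 := by
    intro x
    simp only [hE]
    rw [← Finset.sum_div, Finset.sum_comm]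
  have hmaster : ∀ x y : X, avgMetric (F n) ρ x y ≤ ε/4 + E x + E y + D x y := by
    intro x y
    have hg : ∀ g ∈ F n, ρ (g • x) (g • y) ≤ ε/4
        + (∑ c ∈ I, |ρ c (g • x) - ρ c (τ c g • x)|)
        + (∑ c ∈ I, |ρ c (g • y) - ρ c (τ c g • y)|) + D x y := by
      intro g _
      obtain ⟨c, hcI, hc8⟩ := hI (g • x)
      have t1 : ρ (g • x) (g • y) ≤ ρ c (g • x) + ρ c (g • y) := by
        have h := hρt (g • x) c (g • y)
        rw [hρs (g • x) c] at h
        exact h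
      have t2 : ρ c (g • y) - ρ c (g • x) ≤ |ρ c (g • x) - ρ c (g • y)| := by
        rw [abs_sub_comm]; exact le_abs_self _
      have hmid : |ρ c (τ c g • x) - ρ c (τ c g • y)| ≤ ∑ s ∈ S c, |ρ c (s • x) - ρ c (s • y)| :=
        Finset.single_le_sum (f := fun s => |ρ c (s • x) - ρ c (s • y)|)
          (fun s _ => abs_nonneg _) (hτS c g)
      have h3 : |ρ c (g • x) - ρ c (g • y)| ≤ |ρ c (g • x) - ρ c (τ c g • x)|
          + |ρ c (τ c g • x) - ρ c (g • y)| := abs_sub_le _ _ _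
      have h4 : |ρ c (τ c g • x) - ρ c (g • y)| ≤ |ρ c (τ c g • x) - ρ c (τ c g • y)|
          + |ρ c (τ c g • y) - ρ c (g • y)| := abs_sub_le _ _ _
      have h5 : |ρ c (τ c g • y) - ρ c (g • y)| = |ρ c (g • y) - ρ c (τ c g • y)| :=
        abs_sub_comm _ _
      have e1 : |ρ c (g • x) - ρ c (τ c g • x)| ≤ ∑ c' ∈ I, |ρ c' (g • x) - ρ c' (τ c' g • x)| :=
        Finset.single_le_sum (f := fun c' => |ρ c' (g • x) - ρ c' (τ c' g • x)|)
          (fun _ _ => abs_nonneg _) hcI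
      have e2 : (∑ s ∈ S c, |ρ c (s • x) - ρ c (s • y)|) ≤ D x y :=
        Finset.single_le_sum (f := fun c' => ∑ s ∈ S c', |ρ c' (s • x) - ρ c' (s • y)|)
          (fun c' _ => Finset.sum_nonneg fun _ _ => abs_nonneg _) hcI
      have e3 : |ρ c (g • y) - ρ c (τ c g • y)| ≤ ∑ c' ∈ I, |ρ c' (g • y) - ρ c' (τ c' g • y)| :=
        Finset.single_le_sum (f := fun c' => |ρ c' (g • y) - ρ c' (τ c' g • y)|)
          (fun _ _ => abs_nonneg _) hcI
      linarith
    have hsum := Finset.sum_le_sum hg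
    have h6 : ∑ g ∈ F n, (ε/4 + (∑ c ∈ I, |ρ c (g • x) - ρ c (τ c g • x)|)
          + (∑ c ∈ I, |ρ c (g • y) - ρ c (τ c g • y)|) + D x y)
        = (ε/4 + E x + E y + D x y) * c0 := by
      simp only [Finset.sum_add_distrib, Finset.sum_const, nsmul_eq_mul]
      rw [hEx x, hEx y, ← hc0, add_mul, add_mul, add_mul,
        div_mul_cancel₀ _ hc0pos.ne', div_mul_cancel₀ _ hc0pos.ne']
      ring
    simp only [avgMetric, ← hc0]
    rw [div_le_iff₀ hc0pos]
    linarith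
  -- choose centers inside the good set
  set pick : X → X := fun z =>
    if h : ∃ x, E x < η ∧ D z x < ε/32 then h.choose else z with hpick
  refine ⟨J.image pick, Finset.card_image_le, ?_⟩
  have hsub : {x | E x < η} ⊆ {y : X | ∃ x ∈ J.image pick, avgMetric (F n) ρ x y < ε/2} := by
    intro y hy
    have hyE : E y < η := hy
    obtain ⟨z, hzJ, hzy⟩ := hJ y
    have hex : ∃ x, E x < η ∧ D z x < ε/32 := ⟨y, hyE, hzy⟩
    have hpz : pick z = hex.choose := dif_pos hex
    have hprop := hex.choose_spec
    refine ⟨pick z, Finset.mem_image_of_mem _ hzJ, ?_⟩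
    have h1 : E (pick z) < η := by rw [hpz]; exact hprop.1
    have h2 : D z (pick z) < ε/32 := by rw [hpz]; exact hprop.2
    have h3 : D (pick z) y ≤ D (pick z) z + D z y := hDtri _ _ _
    have h4 : D (pick z) z = D z (pick z) := hDsymm _ _
    have h5 := hmaster (pick z) y
    have hη' : η = ε/16 := hη
    linarith
  exact lt_of_lt_of_le hA (ENNReal.toReal_mono (measure_ne_top μ _) (measure_mono hsub))
end

section
/- If μ is mean equicontinuous with respect to (F_n), then μ has bounded complexity with respect to {d̄_{F_n} : n ∈ ℕ}. -/
open MeasureTheory Filter Topology Set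
open scoped Pointwise ENNReal symmDiff BigOperators

variable {X : Type*} [MetricSpace X] [CompactSpace X] [MeasurableSpace X] [BorelSpace X]
variable {G : Type*} [Group G] [Countable G] [Infinite G] [DecidableEq G]
variable [MulAction G X] [ContinuousConstSMul G X]

/-- A set `K` is equicontinuous in the mean w.r.t. `F`: for every `ε > 0` there is `δ > 0`
such that `d̄_{F_n}(x,y) < ε` for all `n` whenever `x, y ∈ K` satisfy `d(x,y) < δ`. -/
def EquicontinuousInMeanOn {G X : Type*} [SMul G X] [MetricSpace X]
    (F : ℕ → Finset G) (K : Set X) : Prop :=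
  ∀ ε : ℝ, 0 < ε → ∃ δ : ℝ, 0 < δ ∧ ∀ x ∈ K, ∀ y ∈ K, dist x y < δ →
    ∀ n : ℕ, avgMetric (F n) dist x y < ε

/-- A set `K` is mean equicontinuous w.r.t. `F`: for every `ε > 0` there is `δ > 0`
such that `limsup_n d̄_{F_n}(x,y) < ε` whenever `x, y ∈ K` satisfy `d(x,y) < δ`. -/
def MeanEquicontinuousOn {G X : Type*} [SMul G X] [MetricSpace X]
    (F : ℕ → Finset G) (K : Set X) : Prop :=
  ∀ ε : ℝ, 0 < ε → ∃ δ : ℝ, 0 < δ ∧ ∀ x ∈ K, ∀ y ∈ K, dist x y < δ →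
    Filter.limsup (fun n => avgMetric (F n) dist x y) Filter.atTop < ε

/-- `μ` is equicontinuous in the mean w.r.t. `F`. -/
def EquicontinuousInMeanMeasure {G X : Type*} [SMul G X] [MetricSpace X]
    [MeasurableSpace X] (μ : Measure X) (F : ℕ → Finset G) : Prop :=
  ∀ τ : ℝ, 0 < τ → ∃ K : Set X, IsCompact K ∧ EquicontinuousInMeanOn F K ∧
    (μ K).toReal > 1 - τ

/-- `μ` is mean equicontinuous w.r.t. `F`. -/
def MeanEquicontinuousMeasure {G X : Type*} [SMul G X] [MetricSpace X]
    [MeasurableSpace X] (μ : Measure X) (F : ℕ → Finset G) : Prop :=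
  ∀ τ : ℝ, 0 < τ → ∃ K : Set X, IsCompact K ∧ MeanEquicontinuousOn F K ∧
    (μ K).toReal > 1 - τ


section Aux

variable {X : Type*} [MetricSpace X] [CompactSpace X] [MeasurableSpace X] [BorelSpace X]
variable {G : Type*} [Group G] [MulAction G X] [ContinuousConstSMul G X]

lemma avgMetric_nonneg' (F : Finset G) (x y : X) :
    0 ≤ avgMetric F (fun a b => dist a b) x y :=
  div_nonneg (Finset.sum_nonneg fun g _ => dist_nonneg) (Nat.cast_nonneg _)

lemma avgMetric_self' (F : Finset G) (x : X) :
    avgMetric F (fun a b => dist a b) x x = 0 := by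
  simp [avgMetric]

lemma avgMetric_continuous' (F : Finset G) (x : X) :
    Continuous fun y => avgMetric F (fun a b => dist a b) x y := by
  unfold avgMetric
  exact (continuous_finset_sum _ fun g _ =>
    (continuous_const.dist (continuous_const_smul g))).div_const _

lemma avgMetric_le' (F : Finset G) (x y : X) {C : ℝ} (hC : 0 ≤ C)
    (h : ∀ a b : X, dist a b ≤ C) :
    avgMetric F (fun a b => dist a b) x y ≤ C := by
  unfold avgMetric
  rcases F.eq_empty_or_nonempty with h0 | hne
  · simp [h0, hC]
  · have hcard : (0 : ℝ) < F.card := by exact_mod_cast hne.card_pos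
    rw [div_le_iff₀ hcard]
    calc ∑ g ∈ F, dist (g • x) (g • y) ≤ F.card • C :=
          Finset.sum_le_card_nsmul _ _ _ (fun g _ => h _ _)
      _ = C * F.card := by rw [nsmul_eq_mul]; ring

lemma exists_full_cover' (μ : Measure X) [IsProbabilityMeasure μ] (F : Finset G)
    {c : ℝ} (hc : 0 < c) :
    ∃ s : Finset X, {y : X | ∃ x ∈ s, avgMetric F (fun a b => dist a b) x y < c} = univ := by
  obtain ⟨s, hs⟩ := isCompact_univ.elim_finite_subcover
      (fun x : X => {y | avgMetric F (fun a b => dist a b) x y < c})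
      (fun x => isOpen_lt (avgMetric_continuous' F x) continuous_const)
      (fun y _ => mem_iUnion.2 ⟨y, by simpa [avgMetric_self'] using hc⟩)
  refine ⟨s, eq_univ_of_forall fun y => ?_⟩
  obtain ⟨x, hx, hxy⟩ := mem_iUnion₂.1 (hs (mem_univ y))
  exact ⟨x, hx, hxy⟩

end Aux

theorem boundedComplexity_of_meanEquicontinuous
    (μ : Measure X) [IsProbabilityMeasure μ] [SMulInvariantMeasure G X μ]
    (F : ℕ → Finset G) (hF : FolnerSeq F)
    (hme : MeanEquicontinuousMeasure μ F) :
    BoundedComplexity μ F (fun x y => dist x y) := by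
  classical
  intro ε hε
  obtain ⟨C, hC⟩ := Metric.isBounded_iff.1 (isCompact_univ : IsCompact (univ : Set X)).isBounded
  set C' : ℝ := max C 0 with hC'def
  have hC'0 : 0 ≤ C' := le_max_right _ _
  have hdistC : ∀ a b : X, dist a b ≤ C' := fun a b =>
    le_trans (hC (mem_univ a) (mem_univ b)) (le_max_left _ _)
  obtain ⟨K, hKc, hKme, hKμ⟩ := hme (ε / 2) (by linarith)
  obtain ⟨δ, hδ, hδme⟩ := hKme (ε / 4) (by linarith)
  obtain ⟨t, ht⟩ := hKc.elim_finite_subcover (fun z : K => Metric.ball (z : X) δ)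
      (fun z => Metric.isOpen_ball)
      (fun x hx => mem_iUnion.2 ⟨⟨x, hx⟩, Metric.mem_ball_self hδ⟩)
  set m : ℕ := t.card with hm
  set η : ℝ := ε / (4 * (m + 1)) with hηdef
  have hηpos : 0 < η := by positivity
  set E : K → ℕ → Set X := fun z N =>
    (K ∩ Metric.ball (z : X) δ) ∩
      ⋂ (n : ℕ) (_ : N ≤ n), {y | avgMetric (F n) (fun a b => dist a b) (z : X) y < ε / 2}
    with hEdef
  have hEmeas : ∀ z N, MeasurableSet (E z N) := by
    intro z N
    refine (hKc.measurableSet.inter Metric.isOpen_ball.measurableSet).inter ?_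
    exact MeasurableSet.iInter fun n => MeasurableSet.iInter fun _ =>
      (isOpen_lt (avgMetric_continuous' (F n) (z : X)) continuous_const).measurableSet
  have hEmono : ∀ z, Monotone (E z) := by
    intro z N N' hNN'
    refine inter_subset_inter_right _ ?_
    intro y hy
    simp only [mem_iInter, mem_setOf_eq] at hy ⊢
    exact fun n hn => hy n (le_trans hNN' hn)
  have hEunion : ∀ z : K, (K ∩ Metric.ball (z : X) δ) ⊆ ⋃ N, E z N := by
    intro z y hy
    have hyd : dist (z : X) y < δ := by
      rw [dist_comm]; exact Metric.mem_ball.1 hy.2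
    have hlim := hδme (z : X) z.2 y hy.1 hyd
    have hbdd : IsBoundedUnder (· ≤ ·) atTop
        (fun n => avgMetric (F n) dist (z : X) y) :=
      isBoundedUnder_of ⟨C', fun n => avgMetric_le' (F n) _ _ hC'0 hdistC⟩
    have hev : ∀ᶠ n in atTop, avgMetric (F n) dist (z : X) y < ε / 2 :=
      eventually_lt_of_limsup_lt (lt_of_lt_of_le hlim (by linarith)) hbdd
    obtain ⟨N0, hN0⟩ := eventually_atTop.1 hev
    refine mem_iUnion.2 ⟨N0, ⟨hy, ?_⟩⟩
    simp only [mem_iInter, mem_setOf_eq]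
    exact fun n hn => hN0 n hn
  have hNz : ∀ z : K, ∃ N, (μ ((K ∩ Metric.ball (z : X) δ) \ E z N)).toReal < η := by
    intro z
    have hanti : Antitone (fun N => (K ∩ Metric.ball (z : X) δ) \ E z N) := by
      intro N N' hNN'
      exact diff_subset_diff_right (hEmono z hNN')
    have hiInter : (⋂ N, (K ∩ Metric.ball (z : X) δ) \ E z N) = ∅ := by
      apply eq_empty_iff_forall_notMem.2
      intro y hy
      have hy0 := mem_iInter.1 hy 0
      obtain ⟨N, hN⟩ := mem_iUnion.1 (hEunion z hy0.1)
      exact (mem_iInter.1 hy N).2 hN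
    have htend := tendsto_measure_iInter_atTop (μ := μ)
      (fun N => ((hKc.measurableSet.inter Metric.isOpen_ball.measurableSet).diff
        (hEmeas z N)).nullMeasurableSet) hanti ⟨0, measure_ne_top μ _⟩
    rw [hiInter, measure_empty] at htend
    have hev := htend.eventually_lt_const
      (show (0 : ℝ≥0∞) < ENNReal.ofReal η from ENNReal.ofReal_pos.2 hηpos)
    obtain ⟨N, hN⟩ := eventually_atTop.1 hev
    exact ⟨N, ENNReal.toReal_lt_of_lt_ofReal (hN N le_rfl)⟩
  choose Nz hNz' using hNz
  set N : ℕ := t.sup Nz with hNdef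
  set A : Set X := ⋃ z ∈ t, E z N with hAdef
  have hAmeas : MeasurableSet A :=
    MeasurableSet.biUnion t.countable_toSet fun z _ => hEmeas z N
  have hAcsub : Aᶜ ⊆ Kᶜ ∪ ⋃ z ∈ t, ((K ∩ Metric.ball (z : X) δ) \ E z (Nz z)) := by
    intro y hy
    by_cases hyK : y ∈ K
    · obtain ⟨z, hz, hyz⟩ := mem_iUnion₂.1 (ht hyK)
      refine Or.inr (mem_iUnion₂.2 ⟨z, hz, ⟨⟨hyK, hyz⟩, fun hyE => ?_⟩⟩)
      exact hy (mem_iUnion₂.2 ⟨z, hz, hEmono z (Finset.le_sup hz) hyE⟩)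
    · exact Or.inl hyK
  have hμKc : (μ Kᶜ).toReal < ε / 2 := by
    have h1 : μ K + μ Kᶜ = 1 :=
      (measure_add_measure_compl hKc.measurableSet).trans measure_univ
    have h2 : (μ K).toReal + (μ Kᶜ).toReal = 1 := by
      rw [← ENNReal.toReal_add (measure_ne_top μ _) (measure_ne_top μ _), h1, ENNReal.toReal_one]
    linarith
  have hμAc : (μ Aᶜ).toReal < ε := by
    have hle : μ Aᶜ ≤ μ Kᶜ + ∑ z ∈ t, μ ((K ∩ Metric.ball (z : X) δ) \ E z (Nz z)) := by
      refine le_trans (measure_mono hAcsub) (le_trans (measure_union_le _ _) ?_)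
      exact add_le_add le_rfl (measure_biUnion_finset_le t _)
    have hfin : μ Kᶜ + ∑ z ∈ t, μ ((K ∩ Metric.ball (z : X) δ) \ E z (Nz z)) ≠ ⊤ := by
      refine ENNReal.add_ne_top.2 ⟨measure_ne_top μ _, ?_⟩
      exact (ENNReal.sum_lt_top.2 fun z _ => measure_lt_top μ _).ne
    have h3 : (μ Aᶜ).toReal ≤ (μ Kᶜ).toReal +
        ∑ z ∈ t, (μ ((K ∩ Metric.ball (z : X) δ) \ E z (Nz z))).toReal := by
      refine le_trans (ENNReal.toReal_mono hfin hle) ?_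
      rw [ENNReal.toReal_add (measure_ne_top μ _)
        ((ENNReal.sum_lt_top.2 fun z _ => measure_lt_top μ _).ne),
        ENNReal.toReal_sum (fun z _ => measure_ne_top μ _)]
    have h4 : ∑ z ∈ t, (μ ((K ∩ Metric.ball (z : X) δ) \ E z (Nz z))).toReal ≤ m * η := by
      calc ∑ z ∈ t, (μ ((K ∩ Metric.ball (z : X) δ) \ E z (Nz z))).toReal
          ≤ ∑ _z ∈ t, η := Finset.sum_le_sum fun z _ => (hNz' z).le
        _ = m * η := by rw [Finset.sum_const, nsmul_eq_mul]
    have h5 : (m : ℝ) * η ≤ ε / 4 := by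
      rw [hηdef, ← mul_div_assoc,
        div_le_div_iff₀ (by positivity) (by norm_num : (0:ℝ) < 4)]
      nlinarith [hε.le, Nat.cast_nonneg (α := ℝ) m]
    linarith
  have hμA : (μ A).toReal > 1 - ε := by
    have h1 : μ A + μ Aᶜ = 1 :=
      (measure_add_measure_compl hAmeas).trans measure_univ
    have h2 : (μ A).toReal + (μ Aᶜ).toReal = 1 := by
      rw [← ENNReal.toReal_add (measure_ne_top μ _) (measure_ne_top μ _), h1, ENNReal.toReal_one]
    linarith
  have hsmall : ∀ n : ℕ, ∃ s : Finset X,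
      {y : X | ∃ x ∈ s, avgMetric (F n) (fun a b => dist a b) x y < ε / 2} = univ :=
    fun n => exists_full_cover' μ (F n) (by linarith)
  choose sn hsn using hsmall
  refine ⟨max ((Finset.range N).sup fun n => (sn n).card) m, fun n => ?_⟩
  by_cases hn : n < N
  · refine ⟨sn n, ?_, ?_⟩
    · exact le_trans (Finset.le_sup (f := fun n => (sn n).card) (Finset.mem_range.2 hn)) (le_max_left _ _)
    · rw [hsn n, measure_univ, ENNReal.toReal_one]
      linarith
  · push_neg at hn
    refine ⟨t.image (fun z : K => (z : X)), le_trans Finset.card_image_le (le_max_right _ _), ?_⟩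
    have hAS : A ⊆ {y : X | ∃ x ∈ t.image (fun z : K => (z : X)),
        avgMetric (F n) (fun a b => dist a b) x y < ε / 2} := by
      intro y hy
      obtain ⟨z, hz, hyz⟩ := mem_iUnion₂.1 hy
      refine ⟨(z : X), Finset.mem_image.2 ⟨z, hz, rfl⟩, ?_⟩
      have := mem_iInter.1 (mem_iInter.1 hyz.2 n)
      exact this hn
    have := ENNReal.toReal_mono (measure_ne_top μ _) (measure_mono hAS)
    linarith
end
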